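/- Let G be a stochastic game with terminal set T, and let σu2 be the memoryless Player 2 strategy defined by σu2(v)(v') = 1/|post(v)| for every v ∈ V2 and v' ∈ post(v). Then G is stopping under fairness if and only if Prob^{σ1,σu2}_{G,v}(◇T) = 1 for every v ∈ V and every σ1 ∈ Σ1. -/

import Mathlib

open MeasureTheory
open scoped ENNReal Classical

/-- A turn-based two-player stochastic game on a finite vertex set `V`. -/
structure StochGame (V : Type*) [Fintype V] where
  /-- Player 1 vertices -/
  V1 : Finset V
  /-- Player 2 vertices -/
  V2 : Finset V
  /-- probabilistic vertices -/
  VP : Finset V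
  cover : ∀ v : V, v ∈ V1 ∨ v ∈ V2 ∨ v ∈ VP
  disj12 : ∀ v : V, ¬(v ∈ V1 ∧ v ∈ V2)
  disj1P : ∀ v : V, ¬(v ∈ V1 ∧ v ∈ VP)
  disj2P : ∀ v : V, ¬(v ∈ V2 ∧ v ∈ VP)
  /-- the probabilistic transition function -/
  δ : V → V → ℝ
  δ_nonneg : ∀ v v', 0 ≤ δ v v'
  δ_le_one : ∀ v v', δ v v' ≤ 1
  det : ∀ v : V, (v ∈ V1 ∨ v ∈ V2) → ∀ v', δ v v' = 0 ∨ δ v v' = 1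
  prob : ∀ v ∈ VP, ∑ v' : V, δ v v' = 1
  post_nonempty : ∀ v : V, ∃ v', 0 < δ v v'

namespace StochGame

variable {V : Type*} [Fintype V]

/-- successors of a vertex -/
def post (G : StochGame V) (v : V) : Set V := {v' | 0 < G.δ v v'}

/-- a vertex is terminal if `δ(v,v) = 1` and `δ(v,v') = 0` for `v' ≠ v`. -/
def Terminal (G : StochGame V) (v : V) : Prop :=
  G.δ v v = 1 ∧ ∀ v', v' ≠ v → G.δ v v' = 0

/-- A strategy for the player owning the vertices in `P`: a function assigning to each
finite history and current vertex a probability distribution over vertices, supported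
on successors when the current vertex belongs to `P`. -/
structure Strategy (G : StochGame V) (P : Finset V) where
  f : List V → V → V → ℝ
  nonneg : ∀ h v v', 0 ≤ f h v v'
  sum_one : ∀ h v, ∑ v' : V, f h v v' = 1
  support : ∀ h v, v ∈ P → ∀ v', 0 < f h v v' → 0 < G.δ v v'

variable {G : StochGame V} {P : Finset V}

/-- a memoryless strategy only depends on the current vertex -/
def Strategy.Memoryless (σ : Strategy G P) : Prop :=
  ∀ h h' cur, σ.f h cur = σ.f h' cur

/-- a deterministic (pure) strategy takes Dirac distributions as values -/
def Strategy.Deterministic (σ : Strategy G P) : Prop :=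
  ∀ h cur, ∃ v', ∀ u, σ.f h cur u = if u = v' then 1 else 0

/-- a semi-Markov strategy depends only on the initial vertex, the number of elapsed
steps and the current vertex -/
def Strategy.SemiMarkov (σ : Strategy G P) : Prop :=
  ∀ (v0 : V) (h h' : List V) (cur : V), h.length = h'.length →
    σ.f (v0 :: h) cur = σ.f (v0 :: h') cur

variable [DecidableEq V]

/-- one-step transition probability given strategies of both players -/
noncomputable def step (G : StochGame V) (σ1 : Strategy G G.V1) (σ2 : Strategy G G.V2)
    (h : List V) (v v' : V) : ℝ :=
  if v ∈ G.V1 then σ1.f h v v' else if v ∈ G.V2 then σ2.f h v v' else G.δ v v'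

/-- the history consisting of the first `i` vertices of `w` -/
def hist (w : ℕ → V) (i : ℕ) : List V := (List.range i).map w

/-- probability that the play starts with the vertices `w 0, w 1, …, w n` when
the game starts at `v` and the players use strategies `σ1`, `σ2`. -/
noncomputable def prefixProb (G : StochGame V) (σ1 : Strategy G G.V1) (σ2 : Strategy G G.V2)
    (v : V) (n : ℕ) (w : ℕ → V) : ℝ :=
  (if w 0 = v then 1 else 0) *
    ∏ i ∈ Finset.range n, G.step σ1 σ2 (hist w i) (w i) (w (i + 1))

/-- the cylinder of all infinite plays agreeing with `w` on the first `n+1` coordinates -/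
def cyl (n : ℕ) (w : ℕ → V) : Set (ℕ → V) := {ω | ∀ i ≤ n, ω i = w i}

variable [MeasurableSpace V]

/-- `μ` is the path measure of the game `G` starting at `v` under strategies `σ1, σ2`:
it is the (unique) probability measure on `V^ω` (with the product σ-algebra) whose
cylinder probabilities are given by the products of the transition probabilities. -/
def IsPathMeasure (G : StochGame V) (σ1 : Strategy G G.V1) (σ2 : Strategy G G.V2)
    (v : V) (μ : Measure (ℕ → V)) : Prop :=
  IsProbabilityMeasure μ ∧
    ∀ (n : ℕ) (w : ℕ → V), μ (cyl n w) = ENNReal.ofReal (G.prefixProb σ1 σ2 v n w)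

/-- the set of vertices occurring infinitely often in a play -/
def infOcc (ω : ℕ → V) : Set V := {u | ∀ N, ∃ n, N ≤ n ∧ ω n = u}

/-- the set of plays that are fair for Player 2 -/
def FP2 (G : StochGame V) : Set (ℕ → V) :=
  {ω | ∀ u ∈ G.V2, u ∈ infOcc ω → ∀ u' ∈ G.post u, u' ∈ infOcc ω}

/-- the event `◇T` that a terminal vertex is reached -/
def ReachT (G : StochGame V) : Set (ℕ → V) := {ω | ∃ i, G.Terminal (ω i)}

/-- A Player 2 strategy is (almost surely) fair if the fair plays have probability 1
under any Player 1 strategy and any initial vertex. -/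
def Fair (G : StochGame V) (σ2 : Strategy G G.V2) : Prop :=
  ∀ (σ1 : Strategy G G.V1) (v : V) (μ : Measure (ℕ → V)),
    G.IsPathMeasure σ1 σ2 v μ → μ G.FP2 = 1

/-- `G` is stopping under fairness: a terminal vertex is reached almost surely
whenever Player 2 plays a fair strategy. -/
def StoppingUnderFairness (G : StochGame V) : Prop :=
  ∀ (σ1 : Strategy G G.V1) (σ2 : Strategy G G.V2), G.Fair σ2 →
    ∀ (v : V) (μ : Measure (ℕ → V)), G.IsPathMeasure σ1 σ2 v μ → μ G.ReachT = 1

/-- the total accumulated reward of a play -/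
noncomputable def rew (r : V → ℝ) (ω : ℕ → V) : ℝ≥0∞ := ∑' i, ENNReal.ofReal (r (ω i))

/-- the expected total reward -/
noncomputable def expRew (μ : Measure (ℕ → V)) (r : V → ℝ) : ℝ≥0∞ := ∫⁻ ω, rew r ω ∂μ

end StochGame

/-!
A fair Player 2 strategy makes every Player 2 vertex that is visited infinitely often pass on to
all of its successors; by Lévy's conditional Borel–Cantelli lemma the probabilistic vertices, and
the uniform strategy at Player 2 vertices, do the same almost surely. Hence, on a play that never
stops, the set of vertices visited infinitely often is a *trap*: a nonempty set of non-terminal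
vertices that Player 1 can keep the play in while Player 2 and chance may take every edge. So if
there is no trap, every fair strategy stops almost surely. Conversely, from a trap Player 1 can
stay in it forever against any Player 2 strategy, in particular against the uniform one, so
stopping against the uniform strategy rules out traps. This last step needs a path measure to
exist: path measures are exactly the Ionescu-Tulcea trajectory measures `pathMeasure`.
-/

open ProbabilityTheory Preorder Finset Filtration

lemma MeasureTheory.measure_setOf_measure_singleton_eq_zero {α : Type*} [MeasurableSpace α]
    [Countable α] (ν : Measure α) : ν {a | ν {a} = 0} = 0 := by
  rw [← Set.biUnion_of_singleton {a | ν {a} = 0}]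
  exact (measure_biUnion_null_iff (Set.to_countable _)).2 fun a ha => ha

namespace StochGame

section Sequences

variable {V : Type*}

lemma hist_congr {w w' : ℕ → V} {n : ℕ} (hw : ∀ i < n, w i = w' i) : hist w n = hist w' n :=
  List.map_congr_left fun i hi => hw i (List.mem_range.mp hi)

def extendIic {n : ℕ} (t : Π _ : Iic n, V) (i : ℕ) : V :=
  t ⟨min i n, mem_Iic.2 (min_le_right i n)⟩

lemma frestrictLe_extendIic {n : ℕ} (t : Π _ : Iic n, V) :
    frestrictLe n (extendIic t) = t := by
  funext ⟨i, hi⟩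
  simp [extendIic, min_eq_left (mem_Iic.1 hi)]

lemma extendIic_frestrictLe {n i : ℕ} (w : ℕ → V) (hi : i ≤ n) :
    extendIic (frestrictLe n w) i = w i := by
  simp [extendIic, min_eq_left hi]

def prefixAndNext (n : ℕ) (x : ℕ → V) : (Π _ : Iic n, V) × V := (frestrictLe n x, x (n + 1))

lemma cyl_eq_preimage (n : ℕ) (w : ℕ → V) :
    cyl n w = frestrictLe n ⁻¹' ({frestrictLe n w} : Set (Π _ : Iic n, V)) := by
  ext ω
  simp [cyl, funext_iff]

lemma mem_infOcc_iff_frequently {ω : ℕ → V} {u : V} :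
    u ∈ infOcc ω ↔ ∃ᶠ n in Filter.atTop, ω n = u :=
  Filter.frequently_atTop.symm

lemma mem_infOcc_iff_infinite {ω : ℕ → V} {u : V} :
    u ∈ infOcc ω ↔ {n | ω n = u}.Infinite :=
  mem_infOcc_iff_frequently.trans Nat.frequently_atTop_iff_infinite

variable [Finite V]

lemma exists_mem_infOcc (ω : ℕ → V) : ∃ u, u ∈ infOcc ω := by
  obtain ⟨u, hu⟩ := Finite.exists_infinite_fiber ω
  exact ⟨u, mem_infOcc_iff_infinite.2 (Set.infinite_coe_iff.1 hu)⟩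

lemma exists_succ_mem_infOcc {ω : ℕ → V} {u : V} (hu : u ∈ infOcc ω) :
    ∃ u' ∈ infOcc ω, ∃ n, ω n = u ∧ ω (n + 1) = u' := by
  have : Infinite {n | ω n = u} := (mem_infOcc_iff_infinite.1 hu).to_subtype
  obtain ⟨u', hu'⟩ := Finite.exists_infinite_fiber fun n : {n | ω n = u} => ω (n + 1)
  obtain ⟨⟨⟨n, hn⟩, hn'⟩⟩ := hu'.nonempty
  refine ⟨u', mem_infOcc_iff_infinite.2 (Set.infinite_of_injective_forall_mem
    (f := fun m : (fun n : {n | ω n = u} => ω (n + 1)) ⁻¹' {u'} => m.1.1 + 1)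
    (fun a b hab => Subtype.ext (Subtype.ext (by simpa using hab))) fun m => m.2), n, hn, hn'⟩

end Sequences

@[fun_prop]
lemma measurable_prefixAndNext {V : Type*} [MeasurableSpace V] (n : ℕ) :
    Measurable (prefixAndNext (V := V) n) :=
  (measurable_frestrictLe n).prodMk (measurable_pi_apply _)

lemma measurableSet_mem_infOcc {V : Type*} [MeasurableSpace V] [MeasurableSingletonClass V]
    (u : V) : MeasurableSet {ω : ℕ → V | u ∈ infOcc ω} := by
  unfold infOcc
  measurability

variable {V : Type*} [Fintype V]

lemma measurableSet_FP2 [MeasurableSpace V] [MeasurableSingletonClass V] (G : StochGame V) :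
    MeasurableSet G.FP2 :=
  measurableSet_setOfPred.2 <| Measurable.forall fun u => Measurable.forall fun _ =>
    (measurableSet_setOfPred.1 (measurableSet_mem_infOcc u)).imp <| Measurable.forall fun u' =>
      Measurable.forall fun _ => measurableSet_setOfPred.1 (measurableSet_mem_infOcc u')

lemma measurableSet_ReachT [MeasurableSpace V] [DiscreteMeasurableSpace V] (G : StochGame V) :
    MeasurableSet G.ReachT :=
  measurableSet_setOfPred.2 <| Measurable.exists fun i =>
    (Measurable.of_discrete (f := G.Terminal)).comp (measurable_pi_apply i)

structure IsTrap (G : StochGame V) (C : Set V) : Prop where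
  nonempty : C.Nonempty
  not_terminal : ∀ x ∈ C, ¬ G.Terminal x
  exists_post_mem : ∀ x ∈ C, x ∈ G.V1 → ∃ y ∈ C, y ∈ G.post x
  post_subset : ∀ x ∈ C, x ∉ G.V1 → G.post x ⊆ C

variable [DecidableEq V]

section Step

variable (G : StochGame V) (σ1 : Strategy G G.V1) (σ2 : Strategy G G.V2)

lemma step_nonneg (h : List V) (x y : V) : 0 ≤ G.step σ1 σ2 h x y := by
  unfold step
  split_ifs
  · exact σ1.nonneg h x y
  · exact σ2.nonneg h x y
  · exact G.δ_nonneg x y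

lemma step_sum_eq_one (h : List V) (x : V) : ∑ y, G.step σ1 σ2 h x y = 1 := by
  unfold step
  split_ifs with h1 h2
  · exact σ1.sum_one h x
  · exact σ2.sum_one h x
  · exact G.prob x ((G.cover x).resolve_left h1 |>.resolve_left h2)

lemma step_of_mem_V1 {h : List V} {x : V} (hx : x ∈ G.V1) (y : V) :
    G.step σ1 σ2 h x y = σ1.f h x y := if_pos hx

lemma step_of_mem_V2 {h : List V} {x : V} (hx : x ∈ G.V2) (y : V) :
    G.step σ1 σ2 h x y = σ2.f h x y := by
  rw [step, if_neg fun hx1 => G.disj12 x ⟨hx1, hx⟩, if_pos hx]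

lemma step_of_mem_VP {h : List V} {x : V} (hx : x ∈ G.VP) (y : V) :
    G.step σ1 σ2 h x y = G.δ x y := by
  rw [step, if_neg fun hx1 => G.disj1P x ⟨hx1, hx⟩, if_neg fun hx2 => G.disj2P x ⟨hx2, hx⟩]

lemma δ_pos_of_step_pos {h : List V} {x y : V} (hx : x ∉ G.V1)
    (hpos : 0 < G.step σ1 σ2 h x y) : 0 < G.δ x y := by
  by_cases hx2 : x ∈ G.V2
  · rw [step_of_mem_V2 G σ1 σ2 hx2] at hpos
    exact σ2.support h x hx2 y hpos
  · rwa [step, if_neg hx, if_neg hx2] at hpos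

noncomputable def stepPMF (h : List V) (x : V) : PMF V :=
  PMF.ofFintype (fun y => ENNReal.ofReal (G.step σ1 σ2 h x y)) (by
    rw [← ENNReal.ofReal_sum_of_nonneg fun y _ => G.step_nonneg σ1 σ2 h x y,
      step_sum_eq_one, ENNReal.ofReal_one])

variable (v : V)

lemma prefixProb_nonneg (n : ℕ) (w : ℕ → V) : 0 ≤ G.prefixProb σ1 σ2 v n w :=
  mul_nonneg (by split_ifs <;> norm_num) (prod_nonneg fun _ _ => G.step_nonneg σ1 σ2 _ _ _)

lemma prefixProb_succ (n : ℕ) (w : ℕ → V) :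
    G.prefixProb σ1 σ2 v (n + 1) w
      = G.prefixProb σ1 σ2 v n w * G.step σ1 σ2 (hist w n) (w n) (w (n + 1)) := by
  rw [prefixProb, prefixProb, prod_range_succ, mul_assoc]

end Step

section Traps

lemma isTrap_infOcc (G : StochGame V) (σ1 : Strategy G G.V1) (σ2 : Strategy G G.V2)
    {ω : ℕ → V} (hreach : ω ∉ G.ReachT)
    (hpos : ∀ n, 0 < G.step σ1 σ2 (hist ω n) (ω n) (ω (n + 1)))
    (hfair : ∀ u ∉ G.V1, u ∈ infOcc ω → G.post u ⊆ infOcc ω) :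
    G.IsTrap (infOcc ω) where
  nonempty := exists_mem_infOcc ω
  not_terminal x hx hterm := by
    obtain ⟨n, -, hn⟩ := hx 0
    exact hreach ⟨n, hn ▸ hterm⟩
  exists_post_mem x hx hx1 := by
    obtain ⟨y, hy, n, rfl, rfl⟩ := exists_succ_mem_infOcc hx
    have hpos := hpos n
    rw [step_of_mem_V1 G σ1 σ2 hx1] at hpos
    exact ⟨_, hy, σ1.support _ _ hx1 _ hpos⟩
  post_subset x hx hx1 := hfair x hx1 hx

noncomputable def Strategy.ofNext {G : StochGame V} {P : Finset V} (next : V → V)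
    (hnext : ∀ x, next x ∈ G.post x) : Strategy G P where
  f _ x y := if y = next x then 1 else 0
  nonneg _ _ _ := by split_ifs <;> norm_num
  sum_one _ x := by simp
  support _ x _ y hy := by
    split_ifs at hy with h
    · exact h ▸ hnext x
    · exact absurd hy (lt_irrefl 0)

lemma IsTrap.exists_next {G : StochGame V} {C : Set V} (hC : G.IsTrap C) :
    ∃ next : V → V, (∀ x, next x ∈ G.post x) ∧
      ∀ x ∈ C, x ∈ G.V1 → next x ∈ C := by
  have (x : V) : ∃ y ∈ G.post x, x ∈ C → x ∈ G.V1 → y ∈ C := by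
    by_cases hx : x ∈ C ∧ x ∈ G.V1
    · obtain ⟨y, hyC, hy⟩ := hC.exists_post_mem x hx.1 hx.2
      exact ⟨y, hy, fun _ _ => hyC⟩
    · obtain ⟨y, hy⟩ := G.post_nonempty x
      exact ⟨y, hy, fun h1 h2 => absurd ⟨h1, h2⟩ hx⟩
  choose next hnext hC using this
  exact ⟨next, hnext, hC⟩

end Traps

variable [MeasurableSpace V] [DiscreteMeasurableSpace V]

section PathMeasure

variable (G : StochGame V) (σ1 : Strategy G G.V1) (σ2 : Strategy G G.V2)

noncomputable def stepKernel (n : ℕ) : Kernel (Π _ : Iic n, V) V :=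
  Kernel.ofFunOfCountable fun t =>
    (G.stepPMF σ1 σ2 (hist (extendIic t) n) (extendIic t n)).toMeasure

instance (n : ℕ) : IsMarkovKernel (G.stepKernel σ1 σ2 n) :=
  ⟨fun _ => PMF.toMeasure.isProbabilityMeasure _⟩

lemma stepKernel_frestrictLe (n : ℕ) (w : ℕ → V) :
    G.stepKernel σ1 σ2 n (frestrictLe n w) = (G.stepPMF σ1 σ2 (hist w n) (w n)).toMeasure := by
  rw [stepKernel, Kernel.ofFunOfCountable, Kernel.coe_mk,
    hist_congr fun i hi => extendIic_frestrictLe w hi.le, extendIic_frestrictLe w le_rfl]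

lemma stepKernel_frestrictLe_singleton (n : ℕ) (w : ℕ → V) (y : V) :
    G.stepKernel σ1 σ2 n (frestrictLe n w) {y}
      = ENNReal.ofReal (G.step σ1 σ2 (hist w n) (w n) y) := by
  rw [stepKernel_frestrictLe, PMF.toMeasure_apply_singleton _ _ (measurableSet_singleton y)]
  rfl

noncomputable def pathMeasure (v : V) : Measure (ℕ → V) :=
  Kernel.trajMeasure (Measure.dirac v) (G.stepKernel σ1 σ2)

variable (v : V)

instance : IsProbabilityMeasure (G.pathMeasure σ1 σ2 v) := by
  unfold pathMeasure
  infer_instance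

lemma pathMeasure_map_prefixAndNext (n : ℕ) :
    (G.pathMeasure σ1 σ2 v).map (prefixAndNext n)
      = (G.pathMeasure σ1 σ2 v).map (frestrictLe n) ⊗ₘ G.stepKernel σ1 σ2 n :=
  Kernel.map_frestrictLe_trajMeasure_compProd_eq_map_trajMeasure.symm

lemma pathMeasure_cyl_zero (w : ℕ → V) :
    G.pathMeasure σ1 σ2 v (cyl 0 w) = ENNReal.ofReal (G.prefixProb σ1 σ2 v 0 w) := by
  rw [cyl_eq_preimage,
    ← Measure.map_apply (measurable_frestrictLe 0) (measurableSet_singleton _), pathMeasure,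
    Kernel.trajMeasure, Measure.map_comp _ _ (measurable_frestrictLe 0),
    Kernel.traj_map_frestrictLe, Kernel.partialTraj_self, Measure.id_comp,
    MeasurableEquiv.map_apply, Measure.dirac_apply' _ MeasurableSet.of_discrete]
  have h0 : (MeasurableEquiv.piUnique fun _ : Iic 0 => V).symm ⁻¹' {frestrictLe 0 w}
      = {w 0} := by
    ext y
    simp [funext_iff, Unique.forall_iff]
    rfl
  rw [h0]
  by_cases h : w 0 = v <;> simp [prefixProb, h, Ne.symm]

lemma pathMeasure_cyl_succ (n : ℕ) (w : ℕ → V) :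
    G.pathMeasure σ1 σ2 v (cyl (n + 1) w) = G.pathMeasure σ1 σ2 v (cyl n w)
      * ENNReal.ofReal (G.step σ1 σ2 (hist w n) (w n) (w (n + 1))) := by
  have hcyl : cyl (n + 1) w = prefixAndNext n ⁻¹'
      (({frestrictLe n w} : Set (Π _ : Iic n, V)) ×ˢ ({w (n + 1)} : Set V)) := by
    ext x
    simp only [cyl, prefixAndNext, Set.mem_ofPred_eq, Set.mem_preimage, Set.mem_prod,
      Set.mem_singleton_iff, funext_iff, Subtype.forall, mem_Iic, frestrictLe_apply]
    exact ⟨fun h => ⟨fun i hi => h i (by omega), h _ le_rfl⟩,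
      fun h i hi => (Nat.le_succ_iff.1 hi).elim (h.1 i) fun e => e ▸ h.2⟩
  rw [hcyl, ← Measure.map_apply (by fun_prop)
      ((measurableSet_singleton _).prod (measurableSet_singleton _)), pathMeasure_map_prefixAndNext,
    Measure.compProd_apply_prod (measurableSet_singleton _) (measurableSet_singleton _),
    lintegral_singleton, stepKernel_frestrictLe_singleton,
    Measure.map_apply (measurable_frestrictLe n) (measurableSet_singleton _), ← cyl_eq_preimage,
    mul_comm]

lemma pathMeasure_cyl (n : ℕ) (w : ℕ → V) :
    G.pathMeasure σ1 σ2 v (cyl n w) = ENNReal.ofReal (G.prefixProb σ1 σ2 v n w) := by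
  induction n with
  | zero => exact G.pathMeasure_cyl_zero σ1 σ2 v w
  | succ n ih =>
    rw [pathMeasure_cyl_succ, ih, prefixProb_succ,
      ENNReal.ofReal_mul (G.prefixProb_nonneg σ1 σ2 v n w)]

lemma isPathMeasure_pathMeasure : G.IsPathMeasure σ1 σ2 v (G.pathMeasure σ1 σ2 v) :=
  ⟨inferInstance, G.pathMeasure_cyl σ1 σ2 v⟩

variable {G σ1 σ2 v} in
lemma IsPathMeasure.eq_pathMeasure {μ : Measure (ℕ → V)} (hμ : G.IsPathMeasure σ1 σ2 v μ) :
    μ = G.pathMeasure σ1 σ2 v := by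
  have hmarg (n : ℕ) :
      μ.map (frestrictLe n) = (G.pathMeasure σ1 σ2 v).map (frestrictLe n) := by
    refine Measure.ext_of_singleton fun t => ?_
    rw [Measure.map_apply (measurable_frestrictLe n) (measurableSet_singleton t),
      Measure.map_apply (measurable_frestrictLe n) (measurableSet_singleton t),
      ← frestrictLe_extendIic t, ← cyl_eq_preimage, hμ.2, pathMeasure_cyl]
  have hproj := isProjectiveMeasureFamily_map_restrict
    (X := fun n (ω : ℕ → V) => ω n) (P := G.pathMeasure σ1 σ2 v)
    fun n => (measurable_pi_apply n).aemeasurable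
  exact ((isProjectiveLimit_nat_iff hproj μ).2 hmarg).unique fun _ => rfl

end PathMeasure

section AlmostSure

variable (G : StochGame V) (σ1 : Strategy G G.V1) (σ2 : Strategy G G.V2) (v : V)

lemma ae_apply_zero_eq : ∀ᵐ x ∂G.pathMeasure σ1 σ2 v, x 0 = v := by
  have hcyl := G.pathMeasure_cyl σ1 σ2 v 0 fun _ => v
  simp only [prefixProb, if_true, range_zero, prod_empty, mul_one, ENNReal.ofReal_one,
    cyl_eq_preimage] at hcyl
  filter_upwards [(mem_ae_iff_prob_eq_one
    (MeasurableSet.of_discrete.preimage (measurable_frestrictLe 0))).2 hcyl] with x hx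
  exact congrFun hx ⟨0, mem_Iic.2 le_rfl⟩

lemma ae_step_pos : ∀ᵐ x ∂G.pathMeasure σ1 σ2 v,
    ∀ n, 0 < G.step σ1 σ2 (hist x n) (x n) (x (n + 1)) := by
  refine ae_all_iff.2 fun n => ?_
  have hset : {x : ℕ → V | ¬ 0 < G.step σ1 σ2 (hist x n) (x n) (x (n + 1))}
      = prefixAndNext n ⁻¹'
          {p : (Π _ : Iic n, V) × V | G.stepKernel σ1 σ2 n p.1 {p.2} = 0} := by
    ext x
    simp [prefixAndNext, stepKernel_frestrictLe_singleton]
  rw [ae_iff, hset, ← Measure.map_apply (by fun_prop) MeasurableSet.of_discrete,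
    pathMeasure_map_prefixAndNext, Measure.compProd_apply MeasurableSet.of_discrete]
  simp only [Set.preimage_ofPred_eq, measure_setOf_measure_singleton_eq_zero, lintegral_zero]

lemma condExp_indicator_next (n : ℕ) (S : Set (Π _ : Iic n, V)) (B : Set V) :
    (G.pathMeasure σ1 σ2 v)[(prefixAndNext n ⁻¹'
        (S ×ˢ B)).indicator 1 | piLE n]
      =ᵐ[G.pathMeasure σ1 σ2 v]
        fun x => S.indicator (fun t => (G.stepKernel σ1 σ2 n t B).toReal) (frestrictLe n x) := by
  set μ := G.pathMeasure σ1 σ2 v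
  set g : (Π _ : Iic n, V) → ℝ := S.indicator fun t => (G.stepKernel σ1 σ2 n t B).toReal
  have hg : Integrable (g ∘ frestrictLe n) μ :=
    Integrable.of_finite.comp_measurable (by fun_prop)
  refine (ae_eq_condExp_of_forall_setIntegral_eq (piLE.le n)
    ((integrable_const (1 : ℝ)).indicator (MeasurableSet.of_discrete.preimage (by fun_prop)))
    (fun _ _ _ => hg.integrableOn) ?_ ?_).symm <;> rw [piLE_eq_comap_frestrictLe]
  · rintro - ⟨T, -, rfl⟩ -
    have hpair : prefixAndNext n ⁻¹' (S ×ˢ B)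
          ∩ frestrictLe n ⁻¹' T
        = prefixAndNext n ⁻¹' ((T ∩ S) ×ˢ B) := by
      ext x
      simp [prefixAndNext, and_comm, and_assoc]
    calc ∫ x in frestrictLe n ⁻¹' T, g (frestrictLe n x) ∂μ
        = ∫ t in T ∩ S, (G.stepKernel σ1 σ2 n t B).toReal ∂μ.map (frestrictLe n) := by
          rw [← setIntegral_map MeasurableSet.of_discrete
            Measurable.of_discrete.aestronglyMeasurable (by fun_prop),
            setIntegral_indicator MeasurableSet.of_discrete]
      _ = μ.real (prefixAndNext n ⁻¹' ((T ∩ S) ×ˢ B)) := by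
          rw [integral_toReal Measurable.of_discrete.aemeasurable
            (ae_of_all _ fun _ => measure_lt_top _ _), measureReal_def,
            ← Measure.map_apply (by fun_prop) MeasurableSet.of_discrete,
            pathMeasure_map_prefixAndNext,
            Measure.compProd_apply_prod MeasurableSet.of_discrete MeasurableSet.of_discrete]
      _ = ∫ x in frestrictLe n ⁻¹' T,
            (prefixAndNext n ⁻¹' (S ×ˢ B)).indicator 1 x ∂μ := by
          rw [integral_indicator_one (MeasurableSet.of_discrete.preimage (by fun_prop)),
            measureReal_restrict_apply (MeasurableSet.of_discrete.preimage (by fun_prop)), hpair]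
  · exact (Measurable.of_discrete.comp (comap_measurable _)).aestronglyMeasurable

/-- By Lévy's extension of the Borel–Cantelli lemma, the edge `u → u'` is even taken infinitely
often. -/
lemma ae_mem_infOcc_of_le_step {u u' : V} {q : ℝ} (hq : 0 < q)
    (hstep : ∀ h, q ≤ G.step σ1 σ2 h u u') :
    ∀ᵐ x ∂G.pathMeasure σ1 σ2 v, u ∈ infOcc x → u' ∈ infOcc x := by
  set μ := G.pathMeasure σ1 σ2 v
  set s : ℕ → Set (ℕ → V) := fun n => {x | x (n - 1) = u ∧ x n = u'}
  have hs (n : ℕ) : MeasurableSet[piLE n] (s n) := by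
    rw [piLE_eq_comap_frestrictLe]
    exact ⟨{t | t ⟨n - 1, mem_Iic.2 (n.sub_le 1)⟩ = u ∧ t ⟨n, mem_Iic.2 le_rfl⟩ = u'},
      MeasurableSet.of_discrete, rfl⟩
  have hcond : ∀ᵐ x ∂μ, ∀ k, μ[(s (k + 1)).indicator 1 | piLE k] x
      = {t : Π _ : Iic k, V | t ⟨k, mem_Iic.2 le_rfl⟩ = u}.indicator
          (fun t => (G.stepKernel σ1 σ2 k t {u'}).toReal) (frestrictLe k x) := by
    refine ae_all_iff.2 fun k => ?_
    have hsk : s (k + 1) = prefixAndNext k ⁻¹'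
        ({t : Π _ : Iic k, V | t ⟨k, mem_Iic.2 le_rfl⟩ = u} ×ˢ {u'}) := by
      ext x
      simp [s, prefixAndNext]
    rw [hsk]
    exact G.condExp_indicator_next σ1 σ2 v k _ _
  filter_upwards [ae_mem_limsup_atTop_iff μ hs, hcond] with x hlim hx hu
  have hvisits :
      Filter.Tendsto (fun n => ∑ k ∈ range n, {k | x k = u}.indicator (fun _ => q) k)
        Filter.atTop Filter.atTop :=
    (Set.infinite_iff_tendsto_sum_indicator_atTop hq).1 (mem_infOcc_iff_infinite.1 hu)
  have hsum_le (n : ℕ) : ∑ k ∈ range n, {k | x k = u}.indicator (fun _ => q) k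
      ≤ ∑ k ∈ range n, μ[(s (k + 1)).indicator 1 | piLE k] x := by
    refine sum_le_sum fun k _ => ?_
    rw [hx k]
    by_cases hk : x k = u
    · simp [hk, stepKernel_frestrictLe_singleton, G.step_nonneg, hstep]
    · simp [hk]
  have hlimsup := hlim.2 (Filter.tendsto_atTop_mono hsum_le hvisits)
  exact mem_infOcc_iff_frequently.2
    ((Filter.mem_limsup_iff_frequently_mem.1 hlimsup).mono fun n hn => hn.2)

lemma ae_post_subset_infOcc {U : Set V}
    (hU : ∀ u ∈ U, ∀ u' ∈ G.post u, ∃ q > 0, ∀ h, q ≤ G.step σ1 σ2 h u u') :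
    ∀ᵐ x ∂G.pathMeasure σ1 σ2 v, ∀ u ∈ U, u ∈ infOcc x → G.post u ⊆ infOcc x := by
  have h : ∀ᵐ x ∂G.pathMeasure σ1 σ2 v, ∀ u u', u ∈ U → u' ∈ G.post u →
      u ∈ infOcc x → u' ∈ infOcc x :=
    ae_all_iff.2 fun u => ae_all_iff.2 fun u' =>
      Filter.eventually_imp_distrib_left.2 fun hu =>
        Filter.eventually_imp_distrib_left.2 fun hu' =>
          let ⟨_, hq, hstep⟩ := hU u hu u' hu'
          G.ae_mem_infOcc_of_le_step σ1 σ2 v hq hstep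
  filter_upwards [h] with x hx u hu hux u' hu' using hx u u' hu hu' hux

lemma ae_mem_reachT_of_forall_not_isTrap (hfair : ∀ᵐ x ∂G.pathMeasure σ1 σ2 v, x ∈ G.FP2)
    (hnt : ∀ C, ¬ G.IsTrap C) : ∀ᵐ x ∂G.pathMeasure σ1 σ2 v, x ∈ G.ReachT := by
  have hVP := G.ae_post_subset_infOcc σ1 σ2 v (U := G.VP) fun u hu u' hu' =>
    ⟨G.δ u u', hu', fun _ => (G.step_of_mem_VP σ1 σ2 hu u').ge⟩
  filter_upwards [hfair, hVP, G.ae_step_pos σ1 σ2 v] with x hFP hVP hpos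
  by_contra hreach
  refine hnt _ (G.isTrap_infOcc σ1 σ2 hreach hpos fun u hu1 hu => ?_)
  rcases G.cover u with h1 | h2 | hP
  · exact absurd h1 hu1
  · exact fun u' hu' => hFP u h2 hu u' hu'
  · exact hVP u hP hu

lemma IsTrap.ae_forall_mem {C : Set V} (hC : G.IsTrap C) {next : V → V}
    (hnext : ∀ x, next x ∈ G.post x) (hnextC : ∀ x ∈ C, x ∈ G.V1 → next x ∈ C) {w : V}
    (hw : w ∈ C) :
    ∀ᵐ x ∂G.pathMeasure (Strategy.ofNext next hnext) σ2 w, ∀ n, x n ∈ C := by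
  filter_upwards [G.ae_apply_zero_eq _ σ2 w, G.ae_step_pos _ σ2 w] with x h0 hpos n
  induction n with
  | zero => exact h0 ▸ hw
  | succ n ih =>
    by_cases hx1 : x n ∈ G.V1
    · have hmove := hpos n
      rw [step_of_mem_V1 G _ σ2 hx1] at hmove
      simp only [Strategy.ofNext] at hmove
      split_ifs at hmove with h
      · exact h ▸ hnextC _ ih hx1
      · exact absurd hmove (lt_irrefl 0)
    · exact hC.post_subset _ ih hx1 (G.δ_pos_of_step_pos _ σ2 hx1 (hpos n))

lemma IsTrap.exists_pathMeasure_reachT_eq_zero {C : Set V} (hC : G.IsTrap C) :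
    ∃ σ1 w, G.pathMeasure σ1 σ2 w G.ReachT = 0 := by
  obtain ⟨next, hnext, hnextC⟩ := hC.exists_next
  obtain ⟨w, hw⟩ := hC.nonempty
  refine ⟨Strategy.ofNext next hnext, w,
    measure_mono_null ?_ (ae_iff.1 (hC.ae_forall_mem G σ2 hnext hnextC hw))⟩
  rintro x ⟨n, hn⟩ hall
  exact hC.not_terminal _ (hall n) hn

end AlmostSure

lemma fair_of_exists_le (G : StochGame V) (σ2 : Strategy G G.V2)
    (hσ2 : ∀ u ∈ G.V2, ∀ u' ∈ G.post u, ∃ q > 0, ∀ h, q ≤ σ2.f h u u') :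
    G.Fair σ2 := by
  intro σ1 v μ hμ
  rw [hμ.eq_pathMeasure, ← mem_ae_iff_prob_eq_one (measurableSet_FP2 G)]
  filter_upwards [G.ae_post_subset_infOcc σ1 σ2 v (U := G.V2) fun u hu u' hu' =>
    let ⟨q, hq, hle⟩ := hσ2 u hu u' hu'
    ⟨q, hq, fun h => (G.step_of_mem_V2 σ1 σ2 hu u').symm ▸ hle h⟩]
    with x hx u hu hux u' hu' using hx u hu hux hu'

lemma fair_of_uniform (G : StochGame V) (σu2 : G.Strategy G.V2)
    (huniform : ∀ (h : List V) (u : V), u ∈ G.V2 → ∀ u' : V,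
      σu2.f h u u' = if 0 < G.δ u u' then ((G.post u).ncard : ℝ)⁻¹ else 0) :
    G.Fair σu2 :=
  G.fair_of_exists_le σu2 fun u hu u' hu' =>
    ⟨((G.post u).ncard : ℝ)⁻¹,
      inv_pos.2 (Nat.cast_pos.2 ((Set.ncard_pos (Set.toFinite _)).2 (G.post_nonempty u))),
      fun h => (huniform h u hu u').symm ▸ (if_pos (show 0 < G.δ u u' from hu')).symm.le⟩

end StochGame

open StochGame in
/-- `G` is stopping under fairness iff a terminal vertex is reached almost surely against the
uniform memoryless Player 2 strategy (the strategy choosing among successors uniformly). -/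
theorem stoppingUnderFairness_iff_uniform
    {V : Type*} [Fintype V] [DecidableEq V] [MeasurableSpace V] [DiscreteMeasurableSpace V]
    (G : StochGame V) (σu2 : G.Strategy G.V2)
    (huniform : ∀ (h : List V) (u : V), u ∈ G.V2 → ∀ u' : V,
      σu2.f h u u' = if 0 < G.δ u u' then ((G.post u).ncard : ℝ)⁻¹ else 0) :
    G.StoppingUnderFairness ↔
      ∀ (w : V) (σ1 : G.Strategy G.V1) (μ : Measure (ℕ → V)),
        G.IsPathMeasure σ1 σu2 w μ → μ G.ReachT = 1 := by
  refine ⟨fun hstop w σ1 μ hμ => hstop σ1 σu2 (G.fair_of_uniform σu2 huniform) w μ hμ,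
    fun hunif σ1 σ2 hfair v μ hμ => ?_⟩
  have hnt (C : Set V) : ¬ G.IsTrap C := fun hC => by
    obtain ⟨σ1', w, hzero⟩ := hC.exists_pathMeasure_reachT_eq_zero G σu2
    simp [hunif w σ1' _ (G.isPathMeasure_pathMeasure σ1' σu2 w)] at hzero
  have hFP := (mem_ae_iff_prob_eq_one (measurableSet_FP2 G)).2
    (hfair σ1 v _ (G.isPathMeasure_pathMeasure σ1 σ2 v))
  rw [hμ.eq_pathMeasure, ← mem_ae_iff_prob_eq_one (measurableSet_ReachT G)]
  exact G.ae_mem_reachT_of_forall_not_isTrap σ1 σ2 v hFP hnt
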